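/- (Example A) Let 0 < r_1 < r_2 < r_3 < r_4. At the shortest parade α_1 = α_2 = α_3 = α_4 = 0 (signed coordinates x_i = r_i), the Hessian matrix of L with respect to (α_1, α_2, α_3) is positive definite; hence the shortest parade is a nondegenerate local minimum of L (Morse index 0). -/

import Mathlib

/-!
Each chord satisfies `|r' - r| ≤ ell r r' θ`, with equality at `θ = 0`, so the parade with all
angles `0` is even a global minimum of the perimeter. Near `θ = 0` a chord behaves like
`|r' - r| + k θ² / 2` with `k = r r' / |r' - r| > 0`; hence the Hessian is the Laplacian of the
4-cycle with these edge weights, grounded at the fixed vertex 4, and its quadratic form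
`k₄₁ x₁² + k₁₂ (x₁ - x₂)² + k₂₃ (x₂ - x₃)² + k₃₄ x₃²` vanishes only at `x = 0`.
-/

open Real

/-- Length of the chordal segment between points at radii `r`, `r'` whose polar angles
differ by `θ`. -/
noncomputable def ell (r r' θ : ℝ) : ℝ :=
  Real.sqrt (r ^ 2 + r' ^ 2 - 2 * r * r' * Real.cos θ)

/-- The perimeter of the connecting cycle for four concentric circles of radii
`r1, r2, r3, r4`, as a function of the polar angles `a1, a2, a3` of the first three
vertices, the fourth angle being fixed to `0`. -/
noncomputable def L4 (r1 r2 r3 r4 : ℝ) (a1 a2 a3 : ℝ) : ℝ :=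
  ell r1 r2 (a2 - a1) + ell r2 r3 (a3 - a2) + ell r3 r4 (0 - a3) + ell r4 r1 (a1 - 0)

/-- Partial derivative in the first of three variables. -/
noncomputable def pd1 (f : ℝ → ℝ → ℝ → ℝ) (a b c : ℝ) : ℝ := deriv (fun x => f x b c) a

/-- Partial derivative in the second of three variables. -/
noncomputable def pd2 (f : ℝ → ℝ → ℝ → ℝ) (a b c : ℝ) : ℝ := deriv (fun y => f a y c) b

/-- Partial derivative in the third of three variables. -/
noncomputable def pd3 (f : ℝ → ℝ → ℝ → ℝ) (a b c : ℝ) : ℝ := deriv (fun z => f a b z) c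

/-- The Hessian matrix of `L4 r1 r2 r3 r4` at `(a, b, c)` in the reduced coordinates
`(α₁, α₂, α₃)`. -/
noncomputable def hess4 (r1 r2 r3 r4 a b c : ℝ) : Matrix (Fin 3) (Fin 3) ℝ :=
  !![pd1 (pd1 (L4 r1 r2 r3 r4)) a b c, pd1 (pd2 (L4 r1 r2 r3 r4)) a b c,
       pd1 (pd3 (L4 r1 r2 r3 r4)) a b c;
     pd2 (pd1 (L4 r1 r2 r3 r4)) a b c, pd2 (pd2 (L4 r1 r2 r3 r4)) a b c,
       pd2 (pd3 (L4 r1 r2 r3 r4)) a b c;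
     pd3 (pd1 (L4 r1 r2 r3 r4)) a b c, pd3 (pd2 (L4 r1 r2 r3 r4)) a b c,
       pd3 (pd3 (L4 r1 r2 r3 r4)) a b c]

lemma sq_sub_le_ell_sq {r r' : ℝ} (hrr' : 0 ≤ r * r') (θ : ℝ) :
    (r' - r) ^ 2 ≤ r ^ 2 + r' ^ 2 - 2 * r * r' * cos θ := by
  nlinarith [cos_le_one θ]

lemma abs_sub_le_ell {r r' : ℝ} (hrr' : 0 ≤ r * r') (θ : ℝ) : |r' - r| ≤ ell r r' θ := by
  rw [← sqrt_sq_eq_abs]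
  exact sqrt_le_sqrt (sq_sub_le_ell_sq hrr' θ)

lemma ell_zero (r r' : ℝ) : ell r r' 0 = |r' - r| := by
  rw [ell, cos_zero, ← sqrt_sq_eq_abs]
  ring_nf

lemma ell_pos {r r' : ℝ} (hrr' : 0 ≤ r * r') (hne : r ≠ r') (θ : ℝ) : 0 < ell r r' θ :=
  (abs_pos.mpr (sub_ne_zero.mpr hne.symm)).trans_le (abs_sub_le_ell hrr' θ)

lemma hasDerivAt_ell {r r' : ℝ} (hrr' : 0 ≤ r * r') (hne : r ≠ r') (θ : ℝ) :
    HasDerivAt (ell r r') (r * r' * sin θ / ell r r' θ) θ := by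
  have hrad : r ^ 2 + r' ^ 2 - 2 * r * r' * cos θ ≠ 0 :=
    (sq_pos_of_ne_zero (sub_ne_zero.mpr hne.symm)).trans_le (sq_sub_le_ell_sq hrr' θ) |>.ne'
  refine ((((hasDerivAt_cos θ).const_mul (2 * r * r')).const_sub (r ^ 2 + r' ^ 2)).sqrt
    hrad).congr_deriv ?_
  rw [ell]
  field_simp

lemma hasDerivAt_deriv_ell_zero {r r' : ℝ} (hrr' : 0 ≤ r * r') (hne : r ≠ r') :
    HasDerivAt (fun θ => r * r' * sin θ / ell r r' θ) (r * r' / |r' - r|) 0 := by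
  refine (((hasDerivAt_sin 0).const_mul (r * r')).div (hasDerivAt_ell hrr' hne 0)
    (ell_pos hrr' hne 0).ne').congr_deriv ?_
  have habs : |r' - r| ≠ 0 := abs_ne_zero.mpr (sub_ne_zero.mpr hne.symm)
  rw [ell_zero, cos_zero, sin_zero]
  field_simp
  ring

noncomputable def cycleSum (f g h k : ℝ → ℝ) (a b c : ℝ) : ℝ :=
  f (b - a) + g (c - b) + h (0 - c) + k (a - 0)

noncomputable def hessian3 (F : ℝ → ℝ → ℝ → ℝ) (a b c : ℝ) : Matrix (Fin 3) (Fin 3) ℝ :=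
  !![pd1 (pd1 F) a b c, pd1 (pd2 F) a b c, pd1 (pd3 F) a b c;
     pd2 (pd1 F) a b c, pd2 (pd2 F) a b c, pd2 (pd3 F) a b c;
     pd3 (pd1 F) a b c, pd3 (pd2 F) a b c, pd3 (pd3 F) a b c]

section cycleSum

variable {f g h k f' g' h' k' : ℝ → ℝ}

lemma pd1_cycleSum (hf : ∀ x, HasDerivAt f (f' x) x) (hk : ∀ x, HasDerivAt k (k' x) x)
    (a b c : ℝ) : pd1 (cycleSum f g h k) a b c = k' (a - 0) - f' (b - a) :=
  HasDerivAt.deriv <| ((((hf _).comp_const_sub b a).add_const (g (c - b))).add_const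
    (h (0 - c))).add ((hk _).comp_sub_const a 0) |>.congr_deriv (by ring)

lemma pd2_cycleSum (hf : ∀ x, HasDerivAt f (f' x) x) (hg : ∀ x, HasDerivAt g (g' x) x)
    (a b c : ℝ) : pd2 (cycleSum f g h k) a b c = f' (b - a) - g' (c - b) :=
  HasDerivAt.deriv <| ((((hf _).comp_sub_const b a).add ((hg _).comp_const_sub c b)).add_const
    (h (0 - c))).add_const (k (a - 0)) |>.congr_deriv (by ring)

lemma pd3_cycleSum (hg : ∀ x, HasDerivAt g (g' x) x) (hh : ∀ x, HasDerivAt h (h' x) x)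
    (a b c : ℝ) : pd3 (cycleSum f g h k) a b c = g' (c - b) - h' (0 - c) :=
  HasDerivAt.deriv <| ((((hg _).comp_sub_const c b).const_add (f (b - a))).add
    ((hh _).comp_const_sub 0 c)).add_const (k (a - 0)) |>.congr_deriv (by ring)

lemma hessian3_cycleSum_zero (hf : ∀ x, HasDerivAt f (f' x) x) (hg : ∀ x, HasDerivAt g (g' x) x)
    (hh : ∀ x, HasDerivAt h (h' x) x) (hk : ∀ x, HasDerivAt k (k' x) x) {f₂ g₂ h₂ k₂ : ℝ}
    (hf' : HasDerivAt f' f₂ 0) (hg' : HasDerivAt g' g₂ 0) (hh' : HasDerivAt h' h₂ 0)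
    (hk' : HasDerivAt k' k₂ 0) :
    hessian3 (cycleSum f g h k) 0 0 0 =
      !![k₂ + f₂, -f₂, 0; -f₂, f₂ + g₂, -g₂; 0, -g₂, g₂ + h₂] := by
  have hpd1 : pd1 (cycleSum f g h k) = fun a b c => k' (a - 0) - f' (b - a) :=
    funext₃ (pd1_cycleSum hf hk)
  have hpd2 : pd2 (cycleSum f g h k) = fun a b c => f' (b - a) - g' (c - b) :=
    funext₃ (pd2_cycleSum hf hg)
  have hpd3 : pd3 (cycleSum f g h k) = fun a b c => g' (c - b) - h' (0 - c) :=
    funext₃ (pd3_cycleSum hg hh)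
  -- after the first derivatives are substituted, the second ones are taken at `0 - 0`
  rw [← sub_zero 0] at hf' hg' hh' hk'
  have hf'r := hf'.comp_sub_const 0 0
  have hf'l := hf'.comp_const_sub 0 0
  have hg'r := hg'.comp_sub_const 0 0
  have hg'l := hg'.comp_const_sub 0 0
  have hh'l := hh'.comp_const_sub 0 0
  have hk'r := hk'.comp_sub_const 0 0
  rw [hessian3, hpd1, hpd2, hpd3]
  simp only [pd1, pd2, pd3]
  rw [(hk'r.fun_sub hf'l).deriv, (hf'l.sub_const _).deriv, deriv_const, (hf'r.const_sub _).deriv,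
    (hf'r.fun_sub hg'l).deriv, (hg'l.sub_const _).deriv, deriv_const, (hg'r.const_sub _).deriv,
    (hg'r.fun_sub hh'l).deriv]
  simp only [sub_neg_eq_add]

end cycleSum

lemma posDef_tridiag_of_pos {f g h k : ℝ} (hf : 0 < f) (hg : 0 < g) (hh : 0 < h) (hk : 0 < k) :
    (!![k + f, -f, 0; -f, f + g, -g; 0, -g, g + h] : Matrix (Fin 3) (Fin 3) ℝ).PosDef := by
  refine Matrix.posDef_iff_dotProduct_mulVec.mpr ⟨?_, fun x hx => ?_⟩
  · ext i j
    fin_cases i <;> fin_cases j <;> simp [Matrix.conjTranspose_apply]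
  have hq : star x ⬝ᵥ (!![k + f, -f, 0; -f, f + g, -g; 0, -g, g + h] : Matrix _ _ ℝ).mulVec x =
      k * x 0 ^ 2 + f * (x 0 - x 1) ^ 2 + g * (x 1 - x 2) ^ 2 + h * x 2 ^ 2 := by
    simp only [dotProduct, Pi.star_apply, star_trivial, Matrix.mulVec, Matrix.of_apply,
      Matrix.cons_val', Matrix.cons_val_fin_one, Fin.sum_univ_three, Fin.isValue,
      Matrix.cons_val_zero, Matrix.cons_val_one, Matrix.cons_val]
    ring
  rw [hq]
  by_contra! hle
  have hk0 : 0 ≤ k * x 0 ^ 2 := by positivity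
  have hf0 : 0 ≤ f * (x 0 - x 1) ^ 2 := by positivity
  have hg0 : 0 ≤ g * (x 1 - x 2) ^ 2 := by positivity
  have hh0 : 0 ≤ h * x 2 ^ 2 := by positivity
  have h0 : x 0 = 0 := by simpa [hk.ne'] using (by linarith : k * x 0 ^ 2 = 0)
  have h01 : x 0 = x 1 := by
    simpa [hf.ne', sub_eq_zero] using (by linarith : f * (x 0 - x 1) ^ 2 = 0)
  have h12 : x 1 = x 2 := by
    simpa [hg.ne', sub_eq_zero] using (by linarith : g * (x 1 - x 2) ^ 2 = 0)
  refine hx (funext fun i => ?_)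
  fin_cases i <;> simp only [Fin.zero_eta, Fin.mk_one, Fin.reduceFinMk, Pi.zero_apply] <;> linarith

lemma L4_zero_le {r1 r2 r3 r4 : ℝ} (h12 : 0 ≤ r1 * r2) (h23 : 0 ≤ r2 * r3) (h34 : 0 ≤ r3 * r4)
    (h41 : 0 ≤ r4 * r1) (a b c : ℝ) : L4 r1 r2 r3 r4 0 0 0 ≤ L4 r1 r2 r3 r4 a b c := by
  simp only [L4, sub_self, ell_zero]
  linarith [abs_sub_le_ell h12 (b - a), abs_sub_le_ell h23 (c - b), abs_sub_le_ell h34 (0 - c),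
    abs_sub_le_ell h41 (a - 0)]

lemma mul_div_abs_sub_pos {r r' : ℝ} (hr : 0 < r) (hr' : 0 < r') (hne : r ≠ r') :
    0 < r * r' / |r' - r| :=
  div_pos (mul_pos hr hr') (abs_pos.mpr (sub_ne_zero.mpr hne.symm))

/-- Example A: for `0 < r1 < r2 < r3 < r4` the Hessian of the perimeter at
the shortest parade `α₁ = α₂ = α₃ = α₄ = 0` is positive definite; hence the shortest
parade is a nondegenerate local minimum of the perimeter (Morse index 0). -/
theorem stmt_18 (r1 r2 r3 r4 : ℝ) (h1 : 0 < r1) (h12 : r1 < r2) (h23 : r2 < r3)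
    (h34 : r3 < r4) :
    (hess4 r1 r2 r3 r4 0 0 0).PosDef ∧
    IsLocalMin (fun q : ℝ × ℝ × ℝ => L4 r1 r2 r3 r4 q.1 q.2.1 q.2.2) (0, 0, 0) := by
  have h2 : 0 < r2 := h1.trans h12
  have h3 : 0 < r3 := h2.trans h23
  have h4 : 0 < r4 := h3.trans h34
  have h41 : r4 ≠ r1 := (h12.trans (h23.trans h34)).ne'
  refine ⟨?_, .of_forall fun q => L4_zero_le (by positivity) (by positivity) (by positivity)
    (by positivity) _ _ _⟩
  have hess : hess4 r1 r2 r3 r4 0 0 0 =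
      hessian3 (cycleSum (ell r1 r2) (ell r2 r3) (ell r3 r4) (ell r4 r1)) 0 0 0 := rfl
  rw [hess, hessian3_cycleSum_zero (hasDerivAt_ell (by positivity) h12.ne)
    (hasDerivAt_ell (by positivity) h23.ne) (hasDerivAt_ell (by positivity) h34.ne)
    (hasDerivAt_ell (by positivity) h41) (hasDerivAt_deriv_ell_zero (by positivity) h12.ne)
    (hasDerivAt_deriv_ell_zero (by positivity) h23.ne)
    (hasDerivAt_deriv_ell_zero (by positivity) h34.ne)
    (hasDerivAt_deriv_ell_zero (by positivity) h41)]
  exact posDef_tridiag_of_pos (mul_div_abs_sub_pos h1 h2 h12.ne)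
    (mul_div_abs_sub_pos h2 h3 h23.ne) (mul_div_abs_sub_pos h3 h4 h34.ne)
    (mul_div_abs_sub_pos h4 h1 h41)
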